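/- Let A ∈ ℝ^{m×n} with n = l·d be partitioned into l consecutive orthonormal column blocks A[1],…,A[l] ∈ ℝ^{m×d} (i.e., (A[i])ᵀA[i] = I_d for all i), with block coherence μ_B satisfying μ_B < 1/((2k−1)d) for an integer k ≥ 2. Let b = Ax + z with ‖z‖₂ ≤ ε, let λ > 0, and let x^♯ be a minimizer of u ↦ ‖u‖_{2,1} + (1/(2λ))‖b − Au‖₂². Then ‖A(x^♯ − x)‖₂ ≤ (2λ/(√k·β₁·λ + ε))·‖x − x_{{k}}‖_{2,1} + 2(√k·β₁·λ + ε), where β₁ = √(1+(k−1)d·μ_B)/(1−(k−1)d·μ_B). -/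

import Mathlib

noncomputable def l2norm {ι : Type*} [Fintype ι] (v : ι → ℝ) : ℝ :=
  Real.sqrt (∑ i, (v i) ^ 2)

/-- The `i`-th column block of a matrix whose columns are indexed by `Fin l × Fin d`. -/
def blk {m l d : ℕ} (A : Matrix (Fin m) (Fin l × Fin d) ℝ) (i : Fin l) :
    Matrix (Fin m) (Fin d) ℝ :=
  Matrix.of fun r j => A r (i, j)

/-- The spectral (ℓ2 operator) norm of a square matrix. -/
noncomputable def specNorm {d : ℕ} (M : Matrix (Fin d) (Fin d) ℝ) : ℝ :=
  ‖Matrix.toEuclideanCLM (𝕜 := ℝ) M‖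

/-- The block coherence of `A`: the largest spectral norm of `(A[i])ᵀ A[j]` over
pairs of distinct blocks. -/
noncomputable def blockCoherence {m l d : ℕ} (A : Matrix (Fin m) (Fin l × Fin d) ℝ) : ℝ :=
  ⨆ p : {p : Fin l × Fin l // p.1 ≠ p.2}, specNorm ((blk A p.1.1).transpose * blk A p.1.2)

/-- A vector is block `k`-sparse if at most `k` of its blocks are nonzero. -/
def blockSparse {l d : ℕ} (k : ℕ) (v : Fin l × Fin d → ℝ) : Prop :=
  (Finset.univ.filter fun i : Fin l => (fun j => v (i, j)) ≠ 0).card ≤ k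

/-- The mixed ℓ2/ℓ1-norm `‖v‖_{2,1} = ∑ i, ‖v[i]‖₂`. -/
noncomputable def l21norm {l d : ℕ} (v : Fin l × Fin d → ℝ) : ℝ :=
  ∑ i : Fin l, l2norm (fun j => v (i, j))

noncomputable def beta1 (k d : ℕ) (μB : ℝ) : ℝ :=
  Real.sqrt (1 + ((k : ℝ) - 1) * d * μB) / (1 - ((k : ℝ) - 1) * d * μB)

noncomputable def beta2 (k d : ℕ) (μB : ℝ) : ℝ :=
  Real.sqrt k * d * μB / (1 - ((k : ℝ) - 1) * d * μB)

noncomputable def fk (k : ℕ) (t : ℝ) : ℝ :=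
  (k : ℝ) * t ^ 2 + 3 * Real.sqrt k * t + 3

noncomputable def gk (k : ℕ) (t : ℝ) : ℝ :=
  2 * (k : ℝ) * t ^ 2 + 4 * Real.sqrt k * t + 1

section Helpers
open Matrix Finset

variable {ι : Type*} [Fintype ι]

lemma l2norm_nonneg' (v : ι → ℝ) : 0 ≤ l2norm v := Real.sqrt_nonneg _

lemma dot_self_nonneg (v : ι → ℝ) : 0 ≤ v ⬝ᵥ v :=
  Finset.sum_nonneg fun _ _ => mul_self_nonneg _

lemma l2norm_eq_sqrt_dot (v : ι → ℝ) : l2norm v = Real.sqrt (v ⬝ᵥ v) := by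
  simp [l2norm, dotProduct, sq]

lemma l2norm_sq (v : ι → ℝ) : l2norm v ^ 2 = v ⬝ᵥ v := by
  rw [l2norm_eq_sqrt_dot, Real.sq_sqrt (dot_self_nonneg v)]

lemma dot_le_l2 (v w : ι → ℝ) : v ⬝ᵥ w ≤ l2norm v * l2norm w := by
  have h := Finset.sum_mul_sq_le_sq_mul_sq Finset.univ v w
  have h2 : v ⬝ᵥ w ≤ Real.sqrt ((∑ i, v i ^ 2) * (∑ i, w i ^ 2)) := by
    have := Real.sqrt_le_sqrt h
    rw [Real.sqrt_sq_eq_abs] at this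
    exact le_trans (le_abs_self _) this
  calc v ⬝ᵥ w ≤ Real.sqrt ((∑ i, v i ^ 2) * (∑ i, w i ^ 2)) := h2
    _ = l2norm v * l2norm w := by
        rw [Real.sqrt_mul (by positivity)]; rfl

lemma l2norm_neg (v : ι → ℝ) : l2norm (-v) = l2norm v := by
  simp [l2norm]

lemma abs_dot_le_l2 (v w : ι → ℝ) : |v ⬝ᵥ w| ≤ l2norm v * l2norm w := by
  rcases abs_cases (v ⬝ᵥ w) with ⟨h, _⟩ | ⟨h, _⟩
  · rw [h]; exact dot_le_l2 v w
  · rw [h, show -(v ⬝ᵥ w) = (-v) ⬝ᵥ w by simp [dotProduct]]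
    simpa [l2norm_neg] using dot_le_l2 (-v) w

lemma l2norm_add_le (v w : ι → ℝ) : l2norm (v + w) ≤ l2norm v + l2norm w := by
  have h : (v + w) ⬝ᵥ (v + w) ≤ (l2norm v + l2norm w) ^ 2 := by
    have e : (v + w) ⬝ᵥ (v + w) = v ⬝ᵥ v + 2 * (v ⬝ᵥ w) + w ⬝ᵥ w := by
      simp [dotProduct, Finset.sum_add_distrib, Finset.mul_sum]; ring_nf
      rw [← Finset.sum_add_distrib, ← Finset.sum_add_distrib]
      congr 1; funext i; ring
    rw [e, ← l2norm_sq, ← l2norm_sq]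
    nlinarith [dot_le_l2 v w]
  rw [l2norm_eq_sqrt_dot]
  calc Real.sqrt ((v+w) ⬝ᵥ (v+w)) ≤ Real.sqrt ((l2norm v + l2norm w)^2) :=
        Real.sqrt_le_sqrt h
    _ = |l2norm v + l2norm w| := Real.sqrt_sq_eq_abs _
    _ = l2norm v + l2norm w :=
        abs_of_nonneg (add_nonneg (l2norm_nonneg' v) (l2norm_nonneg' w))

lemma l2norm_sub_l2norm_le (a c : ι → ℝ) : l2norm a - l2norm c ≤ l2norm (a - c) := by
  have := l2norm_add_le (a - c) c
  simp only [sub_add_cancel] at this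
  linarith

lemma l2norm_eq_norm {d : ℕ} (v : Fin d → ℝ) :
    l2norm v = ‖(WithLp.equiv 2 (Fin d → ℝ)).symm v‖ := by
  simp [l2norm, EuclideanSpace.norm_eq, WithLp.equiv_symm_apply, PiLp.toLp_apply, Real.norm_eq_abs, sq_abs]

lemma dot_mulVec_le_spec {d : ℕ} (M : Matrix (Fin d) (Fin d) ℝ) (v w : Fin d → ℝ) :
    v ⬝ᵥ M.mulVec w ≤ specNorm M * (l2norm v * l2norm w) := by
  set V := (WithLp.equiv 2 (Fin d → ℝ)).symm v
  set W := (WithLp.equiv 2 (Fin d → ℝ)).symm w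
  have h1 : v ⬝ᵥ M.mulVec w = (inner ℝ V (Matrix.toEuclideanCLM (𝕜 := ℝ) M W) : ℝ) := by
    exact (Matrix.inner_toEuclideanCLM M V W).symm
  rw [h1]
  calc (inner ℝ V (Matrix.toEuclideanCLM (𝕜 := ℝ) M W) : ℝ)
      ≤ ‖V‖ * ‖Matrix.toEuclideanCLM (𝕜 := ℝ) M W‖ := real_inner_le_norm _ _
    _ ≤ ‖V‖ * (specNorm M * ‖W‖) :=
        mul_le_mul_of_nonneg_left (ContinuousLinearMap.le_opNorm _ _) (norm_nonneg _)
    _ = specNorm M * (l2norm v * l2norm w) := by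
        rw [l2norm_eq_norm, l2norm_eq_norm]; ring

lemma abs_dot_mulVec_le_spec {d : ℕ} (M : Matrix (Fin d) (Fin d) ℝ) (v w : Fin d → ℝ) :
    |v ⬝ᵥ M.mulVec w| ≤ specNorm M * (l2norm v * l2norm w) := by
  rcases abs_cases (v ⬝ᵥ M.mulVec w) with ⟨h, _⟩ | ⟨h, _⟩
  · rw [h]; exact dot_mulVec_le_spec M v w
  · rw [h, ← neg_dotProduct]
    simpa [l2norm_neg] using dot_mulVec_le_spec M (-v) w

lemma mulVec_blocks {m l d : ℕ} (A : Matrix (Fin m) (Fin l × Fin d) ℝ)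
    (w : Fin l × Fin d → ℝ) (r : Fin m) :
    A.mulVec w r = ∑ i : Fin l, (blk A i).mulVec (fun a => w (i, a)) r := by
  simp [Matrix.mulVec, dotProduct, blk, Fintype.sum_prod_type]

lemma blk_pair {m l d : ℕ} (A : Matrix (Fin m) (Fin l × Fin d) ℝ) (i j : Fin l)
    (p q : Fin d → ℝ) :
    ((blk A i).mulVec p) ⬝ᵥ ((blk A j).mulVec q)
      = p ⬝ᵥ (((blk A i).transpose * blk A j).mulVec q) := by
  rw [← Matrix.mulVec_mulVec, Matrix.dotProduct_mulVec p, Matrix.vecMul_transpose]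

lemma dot_mulVec_expand {m l d : ℕ} (A : Matrix (Fin m) (Fin l × Fin d) ℝ)
    (w w' : Fin l × Fin d → ℝ) :
    (A.mulVec w) ⬝ᵥ (A.mulVec w') =
      ∑ i : Fin l, ∑ j : Fin l,
        (fun a => w (i, a)) ⬝ᵥ (((blk A i).transpose * blk A j).mulVec (fun a => w' (j, a))) := by
  have : (A.mulVec w) ⬝ᵥ (A.mulVec w') =
      ∑ i : Fin l, ∑ j : Fin l,
        ((blk A i).mulVec (fun a => w (i, a))) ⬝ᵥ ((blk A j).mulVec (fun a => w' (j, a))) := by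
    simp only [dotProduct, mulVec_blocks, Finset.sum_mul_sum]
    rw [Finset.sum_comm]
    apply Finset.sum_congr rfl; intro i _
    rw [Finset.sum_comm]
  rw [this]
  exact Finset.sum_congr rfl fun i _ => Finset.sum_congr rfl fun j _ => blk_pair A i j _ _

lemma master {m l d : ℕ} (A : Matrix (Fin m) (Fin l × Fin d) ℝ)
    (hA : ∀ i, (blk A i).transpose * blk A i = 1) (μ : ℝ)
    (hcross : ∀ i j : Fin l, i ≠ j → specNorm ((blk A i).transpose * blk A j) ≤ μ)
    (w w' : Fin l × Fin d → ℝ) :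
    |(A.mulVec w) ⬝ᵥ (A.mulVec w') -
        ∑ i : Fin l, (fun a => w (i, a)) ⬝ᵥ (fun a => w' (i, a))|
      ≤ μ * ∑ i : Fin l, ∑ j ∈ Finset.univ.erase i,
          l2norm (fun a => w (i, a)) * l2norm (fun a => w' (j, a)) := by
  set f : Fin l → Fin l → ℝ := fun i j =>
    (fun a => w (i, a)) ⬝ᵥ (((blk A i).transpose * blk A j).mulVec (fun a => w' (j, a))) with hf
  have hdiag : ∀ i, f i i = (fun a => w (i, a)) ⬝ᵥ (fun a => w' (i, a)) := by
    intro i; simp [hf, hA i, Matrix.one_mulVec]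
  have hsplit : (A.mulVec w) ⬝ᵥ (A.mulVec w') -
      ∑ i : Fin l, (fun a => w (i, a)) ⬝ᵥ (fun a => w' (i, a))
      = ∑ i : Fin l, ∑ j ∈ Finset.univ.erase i, f i j := by
    rw [dot_mulVec_expand]
    rw [show (∑ i : Fin l, ∑ j : Fin l, f i j) =
        ∑ i : Fin l, (f i i + ∑ j ∈ Finset.univ.erase i, f i j) from
      Finset.sum_congr rfl fun i _ =>
        (Finset.add_sum_erase Finset.univ (f i) (Finset.mem_univ i)).symm]
    rw [Finset.sum_add_distrib]
    simp only [hdiag]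
    ring
  rw [hsplit]
  calc |∑ i : Fin l, ∑ j ∈ Finset.univ.erase i, f i j|
      ≤ ∑ i : Fin l, ∑ j ∈ Finset.univ.erase i, |f i j| := by
        refine le_trans (Finset.abs_sum_le_sum_abs _ _) ?_
        exact Finset.sum_le_sum fun i _ => Finset.abs_sum_le_sum_abs _ _
    _ ≤ ∑ i : Fin l, ∑ j ∈ Finset.univ.erase i,
          μ * (l2norm (fun a => w (i, a)) * l2norm (fun a => w' (j, a))) := by
        refine Finset.sum_le_sum fun i _ => Finset.sum_le_sum fun j hj => ?_
        have hij : i ≠ j := (Finset.ne_of_mem_erase hj).symm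
        refine le_trans (abs_dot_mulVec_le_spec _ _ _) ?_
        exact mul_le_mul_of_nonneg_right (hcross i j hij)
          (mul_nonneg (l2norm_nonneg' _) (l2norm_nonneg' _))
    _ = μ * ∑ i : Fin l, ∑ j ∈ Finset.univ.erase i,
          l2norm (fun a => w (i, a)) * l2norm (fun a => w' (j, a)) := by
        rw [Finset.mul_sum]
        exact Finset.sum_congr rfl fun i _ => (Finset.mul_sum _ _ _).symm

lemma sum_erase_mul_self {l : ℕ} (g : Fin l → ℝ) :
    ∑ i : Fin l, ∑ j ∈ Finset.univ.erase i, g i * g j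
      = (∑ i : Fin l, g i) ^ 2 - ∑ i : Fin l, g i ^ 2 := by
  have h : ∀ i : Fin l, ∑ j ∈ Finset.univ.erase i, g i * g j
      = g i * (∑ j : Fin l, g j) - g i ^ 2 := by
    intro i
    rw [← Finset.mul_sum, Finset.sum_erase_eq_sub (Finset.mem_univ i)]
    ring
  simp_rw [h]
  rw [Finset.sum_sub_distrib, ← Finset.sum_mul]
  ring

end Helpers

open Matrix Finset in
set_option maxHeartbeats 2000000 in
theorem stmt_18 {m l d : ℕ} (A : Matrix (Fin m) (Fin l × Fin d) ℝ)
    (hA : ∀ i, (blk A i).transpose * blk A i = 1)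
    (k : ℕ) (hk : 2 ≤ k)
    (hμB : blockCoherence A < 1 / ((2 * (k : ℝ) - 1) * d))
    (x : Fin l × Fin d → ℝ) (z : Fin m → ℝ) (b : Fin m → ℝ) (hb : b = A.mulVec x + z)
    (ε lam : ℝ) (hz : l2norm z ≤ ε) (hlam : 0 < lam)
    (xs : Fin l × Fin d → ℝ)
    (hmin : ∀ u : Fin l × Fin d → ℝ,
      l21norm xs + 1 / (2 * lam) * l2norm (b - A.mulVec xs) ^ 2 ≤
        l21norm u + 1 / (2 * lam) * l2norm (b - A.mulVec u) ^ 2)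
    (xk : Fin l × Fin d → ℝ) (hxk1 : blockSparse k xk)
    (hxk2 : ∀ y : Fin l × Fin d → ℝ, blockSparse k y → l2norm (xk - x) ≤ l2norm (y - x)) :
    l2norm (A.mulVec (xs - x)) ≤
      2 * lam / (Real.sqrt k * beta1 k d (blockCoherence A) * lam + ε) * l21norm (x - xk)
        + 2 * (Real.sqrt k * beta1 k d (blockCoherence A) * lam + ε) := by
  classical
  -- basic coherence facts
  set μ : ℝ := blockCoherence A with hμdef
  have hbdd : BddAbove (Set.range fun p : {p : Fin l × Fin l // p.1 ≠ p.2} =>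
      specNorm ((blk A p.1.1).transpose * blk A p.1.2)) :=
    Set.Finite.bddAbove (Set.finite_range _)
  have hμ0 : 0 ≤ μ := by
    rcases isEmpty_or_nonempty {p : Fin l × Fin l // p.1 ≠ p.2} with hE | hN
    · rw [hμdef, blockCoherence, Real.iSup_of_isEmpty]
    · obtain ⟨p⟩ := hN
      exact le_trans (norm_nonneg _) (le_ciSup hbdd p)
  have hcross : ∀ i j : Fin l, i ≠ j → specNorm ((blk A i).transpose * blk A j) ≤ μ :=
    fun i j h => le_ciSup hbdd ⟨(i, j), h⟩
  -- d ≥ 1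
  have hd : 1 ≤ d := by
    rcases Nat.eq_zero_or_pos d with h0 | h
    · exfalso
      rw [h0] at hμB
      norm_num at hμB
      exact absurd hμB (not_lt.2 hμ0)
    · exact h
  have hd1 : (1 : ℝ) ≤ (d : ℝ) := by exact_mod_cast hd
  have hk2 : (2 : ℝ) ≤ (k : ℝ) := by exact_mod_cast hk
  -- scalar facts about s
  set s : ℝ := ((k : ℝ) - 1) * d * μ with hsdef
  have hs0 : 0 ≤ s := mul_nonneg (mul_nonneg (by linarith only [hk2]) (by positivity)) hμ0
  have hbig : (0 : ℝ) < (2 * (k : ℝ) - 1) * d := by nlinarith only [hk2, hd1]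
  have hμlt : μ * ((2 * (k : ℝ) - 1) * d) < 1 := by
    have h9 := (lt_div_iff₀ hbig).mp hμB
    linarith only [h9]
  have hks : (k : ℝ) * μ + s ≤ μ * ((2 * (k : ℝ) - 1) * d) := by
    have haux : 0 ≤ μ * ((k : ℝ) * ((d : ℝ) - 1)) :=
      mul_nonneg hμ0 (mul_nonneg (by linarith only [hk2]) (by linarith only [hd1]))
    rw [hsdef]; nlinarith only [haux]
  have hkμ : (k : ℝ) * μ ≤ 1 - s := by linarith only [hks, hμlt]
  have h1s : 0 < 1 - s := by
    have hkmu0 : 0 ≤ (k:ℝ) * μ := mul_nonneg (by linarith only [hk2]) hμ0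
    linarith only [hks, hμlt, hkmu0]
  -- beta1
  set β : ℝ := beta1 k d μ with hβdef
  have hβeq : β = Real.sqrt (1 + s) / (1 - s) := rfl
  have hsqrt1s : 0 < Real.sqrt (1 + s) := Real.sqrt_pos.2 (by linarith only [hs0])
  have hβpos : 0 < β := by rw [hβeq]; positivity
  have hsqk : 0 < Real.sqrt (k : ℝ) := Real.sqrt_pos.2 (by linarith only [hk2])
  have hε0 : 0 ≤ ε := le_trans (l2norm_nonneg' z) hz
  -- the support set
  set S : Finset (Fin l) := Finset.univ.filter (fun i : Fin l => (fun j => xk (i, j)) ≠ 0)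
    with hSdef
  have hScard : (S.card : ℝ) ≤ (k : ℝ) := by exact_mod_cast hxk1
  -- main vectors
  set e : Fin l × Fin d → ℝ := xs - x with hedef
  set N : Fin l → ℝ := fun i => l2norm (fun a => e (i, a)) with hNdef
  have hN0 : ∀ i, 0 ≤ N i := fun i => l2norm_nonneg' _
  set eS : Fin l × Fin d → ℝ := fun p => if p.1 ∈ S then e p else 0 with heSdef
  set eC : Fin l × Fin d → ℝ := fun p => if p.1 ∈ S then 0 else e p with heCdef
  have heSC : eS + eC = e := by
    funext p; by_cases h : p.1 ∈ S <;> simp [heSdef, heCdef, h]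
  -- quantities
  set t : ℝ := l2norm (A.mulVec e) with htdef
  have ht0 : 0 ≤ t := l2norm_nonneg' _
  set u2 : ℝ := ∑ i ∈ S, N i ^ 2 with hu2def
  have hu20 : 0 ≤ u2 := Finset.sum_nonneg fun i _ => sq_nonneg _
  set u : ℝ := Real.sqrt u2 with hudef
  have hu0 : 0 ≤ u := Real.sqrt_nonneg _
  have husq : u ^ 2 = u2 := Real.sq_sqrt hu20
  set sg : ℝ := ∑ i ∈ S, N i with hsgdef
  have hsg0 : 0 ≤ sg := Finset.sum_nonneg fun i _ => hN0 i
  set v : ℝ := ∑ i ∈ Sᶜ, N i with hvdef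
  have hv0 : 0 ≤ v := Finset.sum_nonneg fun i _ => hN0 i
  set T : ℝ := l21norm (x - xk) with hTdef
  have hT0 : 0 ≤ T := Finset.sum_nonneg fun i _ => l2norm_nonneg' _
  -- block norms of eS and eC
  have hblkS : ∀ i : Fin l, (fun a => eS (i, a)) = if i ∈ S then (fun a => e (i, a)) else 0 := by
    intro i; funext a; by_cases h : i ∈ S <;> simp [heSdef, h]
  have hblkC : ∀ i : Fin l, (fun a => eC (i, a)) = if i ∈ S then 0 else (fun a => e (i, a)) := by
    intro i; funext a; by_cases h : i ∈ S <;> simp [heCdef, h]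
  have hl2zero : l2norm (0 : Fin d → ℝ) = 0 := by simp [l2norm]
  have hNS : ∀ i : Fin l, l2norm (fun a => eS (i, a)) = if i ∈ S then N i else 0 := by
    intro i; rw [hblkS i]; by_cases h : i ∈ S <;> simp [h, hl2zero, hNdef]
  have hNC : ∀ i : Fin l, l2norm (fun a => eC (i, a)) = if i ∈ S then 0 else N i := by
    intro i; rw [hblkC i]; by_cases h : i ∈ S <;> simp [h, hl2zero, hNdef]
  -- cauchy-schwarz on S
  have hsgsq : sg ^ 2 ≤ (k : ℝ) * u2 := by
    have h1 : sg ^ 2 ≤ (S.card : ℝ) * u2 := sq_sum_le_card_mul_sum_sq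
    have h2 := mul_le_mul_of_nonneg_right hScard hu20
    linarith only [h1, h2]
  have hsgu : sg ≤ Real.sqrt (k : ℝ) * u := by
    have h1 : sg = Real.sqrt (sg ^ 2) := (Real.sqrt_sq hsg0).symm
    rw [h1, hudef, ← Real.sqrt_mul (by positivity : (0:ℝ) ≤ (k:ℝ))]
    exact Real.sqrt_le_sqrt hsgsq
  -- master applied to (eS, eS)
  set G : Fin m → ℝ := A.mulVec eS with hGdef
  set H : Fin m → ℝ := A.mulVec eC with hHdef
  have hdiagS : ∑ i : Fin l, (fun a => eS (i, a)) ⬝ᵥ (fun a => eS (i, a)) = u2 := by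
    have h1 : ∀ i : Fin l, (fun a => eS (i, a)) ⬝ᵥ (fun a => eS (i, a))
        = if i ∈ S then N i ^ 2 else 0 := by
      intro i
      by_cases h : i ∈ S
      · rw [if_pos h, ← l2norm_sq, hNS i, if_pos h]
      · rw [if_neg h, hblkS i, if_neg h]
        simp [dotProduct]
    simp_rw [h1]
    rw [Finset.sum_ite_mem, Finset.univ_inter]
  have hRS : ∑ i : Fin l, ∑ j ∈ Finset.univ.erase i,
      l2norm (fun a => eS (i, a)) * l2norm (fun a => eS (j, a)) = sg ^ 2 - u2 := by
    simp_rw [hNS]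
    rw [sum_erase_mul_self]
    congr 1
    · congr 1
      rw [Finset.sum_ite_mem, Finset.univ_inter]
    · have : ∀ i : Fin l, (if i ∈ S then N i else 0) ^ 2 = if i ∈ S then N i ^ 2 else 0 := by
        intro i; by_cases h : i ∈ S <;> simp [h]
      simp_rw [this]
      rw [Finset.sum_ite_mem, Finset.univ_inter]
  have hM1 : |G ⬝ᵥ G - u2| ≤ μ * (sg ^ 2 - u2) := by
    have := master A hA μ hcross eS eS
    rw [hdiagS, hRS] at this
    exact this
  -- master applied to (eS, eC)
  have hdiagC : ∑ i : Fin l, (fun a => eS (i, a)) ⬝ᵥ (fun a => eC (i, a)) = 0 := by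
    apply Finset.sum_eq_zero
    intro i _
    by_cases h : i ∈ S
    · rw [hblkC i, if_pos h]; simp [dotProduct]
    · rw [hblkS i, if_neg h]; simp [dotProduct]
  have hRC : ∑ i : Fin l, ∑ j ∈ Finset.univ.erase i,
      l2norm (fun a => eS (i, a)) * l2norm (fun a => eC (j, a)) ≤ sg * v := by
    simp_rw [hNS, hNC]
    have h1 : ∀ i : Fin l, ∑ j ∈ Finset.univ.erase i,
        (if i ∈ S then N i else 0) * (if j ∈ S then 0 else N j)
        ≤ ∑ j : Fin l, (if i ∈ S then N i else 0) * (if j ∈ S then 0 else N j) := by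
      intro i
      apply Finset.sum_le_sum_of_subset_of_nonneg (Finset.subset_univ _)
      intro j _ _
      by_cases h : i ∈ S <;> by_cases h' : j ∈ S <;> simp [h, h'] <;>
        exact mul_nonneg (hN0 i) (hN0 j)
    calc ∑ i : Fin l, ∑ j ∈ Finset.univ.erase i,
          (if i ∈ S then N i else 0) * (if j ∈ S then 0 else N j)
        ≤ ∑ i : Fin l, ∑ j : Fin l,
          (if i ∈ S then N i else 0) * (if j ∈ S then 0 else N j) :=
          Finset.sum_le_sum fun i _ => h1 i
      _ = (∑ i : Fin l, if i ∈ S then N i else 0) * (∑ j : Fin l, if j ∈ S then 0 else N j) := by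
          rw [Finset.sum_mul_sum]
      _ = sg * v := by
          congr 1
          · rw [Finset.sum_ite_mem, Finset.univ_inter]
          · rw [hvdef]
            have : ∀ j : Fin l, (if j ∈ S then 0 else N j) = if j ∈ Sᶜ then N j else 0 := by
              intro j; by_cases h : j ∈ S <;> simp [h]
            simp_rw [this]
            rw [Finset.sum_ite_mem, Finset.univ_inter]
  have hM2 : |G ⬝ᵥ H| ≤ μ * (sg * v) := by
    have h2 := master A hA μ hcross eS eC
    rw [hdiagC, sub_zero] at h2
    calc |G ⬝ᵥ H| ≤ μ * ∑ i : Fin l, ∑ j ∈ Finset.univ.erase i,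
          l2norm (fun a => eS (i, a)) * l2norm (fun a => eC (j, a)) := h2
      _ ≤ μ * (sg * v) := mul_le_mul_of_nonneg_left hRC hμ0
  -- bounds on G ⬝ᵥ G
  have hμsg : μ * (sg ^ 2 - u2) ≤ s * u2 := by
    have h1 : sg ^ 2 - u2 ≤ ((k : ℝ) - 1) * u2 := by linarith only [hsgsq]
    have h2 : μ * (sg ^ 2 - u2) ≤ μ * (((k : ℝ) - 1) * u2) :=
      mul_le_mul_of_nonneg_left h1 hμ0
    have h3 : μ * (((k : ℝ) - 1) * u2) ≤ s * u2 := by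
      have base : 0 ≤ ((k:ℝ) - 1) * μ * u2 :=
        mul_nonneg (mul_nonneg (by linarith only [hk2]) hμ0) hu20
      have hbd := mul_le_mul_of_nonneg_left hd1 base
      calc μ * (((k : ℝ) - 1) * u2) = ((k:ℝ) - 1) * μ * u2 * 1 := by ring
        _ ≤ ((k:ℝ) - 1) * μ * u2 * (d:ℝ) := hbd
        _ = s * u2 := by rw [hsdef]; ring
    linarith only [h2, h3]
  have hGlow : (1 - s) * u2 ≤ G ⬝ᵥ G := by
    have h5 := (abs_le.mp hM1).1
    linarith only [h5, hμsg]
  have hGup : G ⬝ᵥ G ≤ (1 + s) * u2 := by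
    have h5 := (abs_le.mp hM1).2
    linarith only [h5, hμsg]
  have hGnorm : l2norm G ≤ Real.sqrt (1 + s) * u := by
    rw [l2norm_eq_sqrt_dot, hudef, ← Real.sqrt_mul (by linarith : (0:ℝ) ≤ 1 + s)]
    exact Real.sqrt_le_sqrt hGup
  -- key chain
  have hsplitW : A.mulVec e = G + H := by
    rw [hGdef, hHdef, ← Matrix.mulVec_add, heSC]
  have hGA : G ⬝ᵥ G ≤ l2norm G * t + μ * (sg * v) := by
    have h1 : G ⬝ᵥ A.mulVec e = G ⬝ᵥ G + G ⬝ᵥ H := by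
      rw [hsplitW, dotProduct_add]
    have h2 : G ⬝ᵥ A.mulVec e ≤ l2norm G * t := dot_le_l2 _ _
    have h3 := (abs_le.mp hM2).1
    linarith only [h1, h2, h3]
  have hchain : (1 - s) * u ^ 2 ≤ Real.sqrt (1 + s) * u * t + μ * (Real.sqrt (k:ℝ) * u) * v := by
    have h1 : l2norm G * t ≤ Real.sqrt (1 + s) * u * t :=
      mul_le_mul_of_nonneg_right hGnorm ht0
    have h2 : μ * (sg * v) ≤ μ * (Real.sqrt (k:ℝ) * u) * v := by
      have h2a := mul_le_mul_of_nonneg_left (mul_le_mul_of_nonneg_right hsgu hv0) hμ0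
      calc μ * (sg * v) ≤ μ * (Real.sqrt (k:ℝ) * u * v) := h2a
        _ = μ * (Real.sqrt (k:ℝ) * u) * v := by ring
    rw [husq]
    linarith only [hGlow, hGA, h1, h2]
  -- the key bound : sg ≤ √k β t + v
  have hsgle : sg ≤ Real.sqrt (k:ℝ) * β * t + v := by
    rcases eq_or_lt_of_le hu0 with h0 | hup
    · have hu2z : u2 = 0 := by rw [← husq, ← h0]; ring
      have hsq0 : sg ^ 2 ≤ 0 := by
        calc sg ^ 2 ≤ (k:ℝ) * u2 := hsgsq
          _ = 0 := by rw [hu2z]; ring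
      have hsgz : sg = 0 := le_antisymm (by nlinarith only [hsq0, hsg0]) hsg0
      rw [hsgz]
      have h8 : 0 ≤ Real.sqrt (k:ℝ) * β * t := by positivity
      linarith only [h8, hv0]
    · have hstep : (1 - s) * u ≤ Real.sqrt (1 + s) * t + μ * Real.sqrt (k:ℝ) * v := by
        have hc2 : ((1 - s) * u) * u ≤ (Real.sqrt (1 + s) * t + μ * Real.sqrt (k:ℝ) * v) * u := by
          calc ((1 - s) * u) * u = (1 - s) * u ^ 2 := by ring
            _ ≤ Real.sqrt (1 + s) * u * t + μ * (Real.sqrt (k:ℝ) * u) * v := hchain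
            _ = (Real.sqrt (1 + s) * t + μ * Real.sqrt (k:ℝ) * v) * u := by ring
        exact le_of_mul_le_mul_right hc2 hup
      have hgoal2 : (1 - s) * sg ≤ (1 - s) * (Real.sqrt (k:ℝ) * β * t + v) := by
        have hβmul : β * (1 - s) = Real.sqrt (1 + s) := by
          rw [hβeq]; field_simp
        have hA1 : Real.sqrt (k:ℝ) * ((1 - s) * u)
            ≤ Real.sqrt (k:ℝ) * (Real.sqrt (1 + s) * t + μ * Real.sqrt (k:ℝ) * v) :=
          mul_le_mul_of_nonneg_left hstep (le_of_lt hsqk)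
        have hkk : Real.sqrt (k:ℝ) * Real.sqrt (k:ℝ) = (k:ℝ) :=
          Real.mul_self_sqrt (by positivity)
        have hμv : (k:ℝ) * μ * v ≤ (1 - s) * v := mul_le_mul_of_nonneg_right hkμ hv0
        have hsg2 : (1 - s) * sg ≤ (1 - s) * (Real.sqrt (k:ℝ) * u) :=
          mul_le_mul_of_nonneg_left hsgu (le_of_lt h1s)
        have hkk2 : μ * (Real.sqrt (k:ℝ) * Real.sqrt (k:ℝ)) * v = (k:ℝ) * μ * v := by
          rw [hkk]; ring
        have hβt : Real.sqrt (k:ℝ) * t * (β * (1 - s)) = Real.sqrt (k:ℝ) * t * Real.sqrt (1 + s) := by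
          rw [hβmul]
        linarith only [hA1, hμv, hsg2, hkk2, hβt]
      exact le_of_mul_le_mul_left (by linarith only [hgoal2]) h1s
  -- minimality inequality
  have hbx : b - A.mulVec x = z := by rw [hb]; ring
  have hbxs : b - A.mulVec xs = z - A.mulVec e := by
    rw [hb, hedef, Matrix.mulVec_sub]; ring
  set W : Fin m → ℝ := A.mulVec e with hWdef
  have hWsq : l2norm (b - A.mulVec xs) ^ 2 = z ⬝ᵥ z - 2 * (z ⬝ᵥ W) + t ^ 2 := by
    rw [hbxs, l2norm_sq]
    have : (z - W) ⬝ᵥ (z - W) = z ⬝ᵥ z - 2 * (z ⬝ᵥ W) + W ⬝ᵥ W := by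
      rw [sub_dotProduct, dotProduct_sub, dotProduct_sub,
        dotProduct_comm W z]
      ring
    rw [this, htdef, l2norm_sq]
  have hkey1 : t ^ 2 - 2 * (z ⬝ᵥ W) ≤ 2 * lam * (l21norm x - l21norm xs) := by
    have hminx := hmin x
    rw [hbx, hWsq, l2norm_sq z] at hminx
    have hsub : 1 / (2 * lam) * (z ⬝ᵥ z - 2 * (z ⬝ᵥ W) + t ^ 2)
        - 1 / (2 * lam) * (z ⬝ᵥ z) ≤ l21norm x - l21norm xs := by linarith only [hminx]
    have hrw : t ^ 2 - 2 * (z ⬝ᵥ W)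
        = 2 * lam * (1 / (2 * lam) * (z ⬝ᵥ z - 2 * (z ⬝ᵥ W) + t ^ 2)
          - 1 / (2 * lam) * (z ⬝ᵥ z)) := by
      have hlamne : lam ≠ 0 := ne_of_gt hlam
      field_simp
      ring
    rw [hrw]
    exact mul_le_mul_of_nonneg_left hsub (by linarith only [hlam])
  have hzW : z ⬝ᵥ W ≤ ε * t := by
    calc z ⬝ᵥ W ≤ l2norm z * l2norm W := dot_le_l2 _ _
      _ ≤ ε * t := by
          rw [htdef, hWdef]
          exact mul_le_mul_of_nonneg_right hz (l2norm_nonneg' _)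
  -- l21 bound
  have hl21 : l21norm x - l21norm xs ≤ sg + 2 * T - v := by
    have hsum : l21norm x - l21norm xs
        = ∑ i : Fin l, (l2norm (fun a => x (i, a)) - l2norm (fun a => xs (i, a))) := by
      rw [l21norm, l21norm, ← Finset.sum_sub_distrib]
    have hsplit2 : ∑ i : Fin l, (l2norm (fun a => x (i, a)) - l2norm (fun a => xs (i, a)))
        = ∑ i ∈ S, (l2norm (fun a => x (i, a)) - l2norm (fun a => xs (i, a)))
          + ∑ i ∈ Sᶜ, (l2norm (fun a => x (i, a)) - l2norm (fun a => xs (i, a))) :=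
      (S.sum_add_sum_compl _).symm
    have hSbound : ∑ i ∈ S, (l2norm (fun a => x (i, a)) - l2norm (fun a => xs (i, a)))
        ≤ sg := by
      apply Finset.sum_le_sum
      intro i _
      have h1 := l2norm_sub_l2norm_le (fun a => x (i, a)) (fun a => xs (i, a))
      have h2 : ((fun a => x (i, a)) - (fun a => xs (i, a))) = -(fun a => e (i, a)) := by
        funext a; simp [hedef]
      rw [h2, l2norm_neg] at h1
      exact h1
    have hCbound : ∑ i ∈ Sᶜ, (l2norm (fun a => x (i, a)) - l2norm (fun a => xs (i, a)))
        ≤ 2 * T - v := by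
      have hper : ∀ i ∈ Sᶜ, l2norm (fun a => x (i, a)) - l2norm (fun a => xs (i, a))
          ≤ 2 * l2norm (fun a => x (i, a)) - N i := by
        intro i _
        have h1 := l2norm_sub_l2norm_le (fun a => e (i, a)) (-(fun a => x (i, a)))
        have h2 : ((fun a => e (i, a)) - (-(fun a => x (i, a)))) = (fun a => xs (i, a)) := by
          funext a; simp [hedef]
        rw [h2, l2norm_neg] at h1
        simp only [hNdef]
        linarith only [h1]
      have hxT : ∑ i ∈ Sᶜ, l2norm (fun a => x (i, a)) ≤ T := by
        have hTeq : T = ∑ i : Fin l, l2norm (fun a => (x - xk) (i, a)) := by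
          rw [hTdef, l21norm]
        have hmemC : ∀ i ∈ Sᶜ, l2norm (fun a => x (i, a))
            = l2norm (fun a => (x - xk) (i, a)) := by
          intro i hi
          have hnotS : i ∉ S := Finset.mem_compl.mp hi
          have hzero : (fun j => xk (i, j)) = 0 := by
            by_contra hne
            exact hnotS (Finset.mem_filter.mpr ⟨Finset.mem_univ i, hne⟩)
          congr 1
          funext a
          have := congrFun hzero a
          simp only [Pi.zero_apply] at this
          simp [this]
        rw [hTeq]
        calc ∑ i ∈ Sᶜ, l2norm (fun a => x (i, a))
            = ∑ i ∈ Sᶜ, l2norm (fun a => (x - xk) (i, a)) :=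
              Finset.sum_congr rfl hmemC
          _ ≤ ∑ i : Fin l, l2norm (fun a => (x - xk) (i, a)) :=
              Finset.sum_le_sum_of_subset_of_nonneg (Finset.subset_univ _)
                (fun i _ _ => l2norm_nonneg' _)
      calc ∑ i ∈ Sᶜ, (l2norm (fun a => x (i, a)) - l2norm (fun a => xs (i, a)))
          ≤ ∑ i ∈ Sᶜ, (2 * l2norm (fun a => x (i, a)) - N i) := Finset.sum_le_sum hper
        _ = 2 * (∑ i ∈ Sᶜ, l2norm (fun a => x (i, a))) - v := by
            rw [Finset.sum_sub_distrib, Finset.mul_sum, hvdef]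
        _ ≤ 2 * T - v := by linarith only [hxT]
    rw [hsum, hsplit2]
    linarith only [hSbound, hCbound]
  -- combine
  set C : ℝ := Real.sqrt (k : ℝ) * β * lam + ε with hCdef
  have hC : 0 < C := by
    have h7 : 0 < Real.sqrt (k : ℝ) * β * lam := by positivity
    linarith only [h7, hε0, hCdef]
  have hfin : t ^ 2 ≤ 2 * C * t + 4 * lam * T := by
    have h1 : t ^ 2 - 2 * (ε * t) ≤ 2 * lam * (sg + 2 * T - v) := by
      have h6 := mul_le_mul_of_nonneg_left hl21 (by linarith only [hlam] : (0:ℝ) ≤ 2 * lam)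
      linarith only [hkey1, hzW, h6]
    have h2 : sg + 2 * T - v ≤ Real.sqrt (k:ℝ) * β * t + 2 * T := by linarith only [hsgle, hv0]
    have h3 : 2 * lam * (sg + 2 * T - v) ≤ 2 * lam * (Real.sqrt (k:ℝ) * β * t + 2 * T) :=
      mul_le_mul_of_nonneg_left h2 (by linarith only [hlam])
    have h4 : 2 * C * t + 4 * lam * T
        = 2 * lam * (Real.sqrt (k:ℝ) * β * t + 2 * T) + 2 * (ε * t) := by
      rw [hCdef]; ring
    linarith only [h1, h3, h4]
  -- final algebra
  have hCne : C ≠ 0 := ne_of_gt hC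
  set X : ℝ := 2 * lam * T / C with hXdef
  have hX0 : 0 ≤ X := by
    rw [hXdef]
    have h9 : 0 ≤ 2 * lam * T := by positivity
    exact div_nonneg h9 (le_of_lt hC)
  have hCX : C * X = 2 * lam * T := by
    rw [hXdef]
    field_simp
  have hsq : (t - C) ^ 2 ≤ (C + X) ^ 2 := by
    nlinarith only [hfin, hCX, sq_nonneg X]
  have htle : t ≤ 2 * C + X := by
    have h1 : t - C ≤ |t - C| := le_abs_self _
    have h2 : |t - C| = Real.sqrt ((t - C) ^ 2) := (Real.sqrt_sq_eq_abs _).symm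
    have h3 : Real.sqrt ((t - C) ^ 2) ≤ Real.sqrt ((C + X) ^ 2) :=
      Real.sqrt_le_sqrt hsq
    have h4 : Real.sqrt ((C + X) ^ 2) = C + X := by
      rw [Real.sqrt_sq (by linarith only [hC, hX0])]
    linarith only [h1, h2, h3, h4]
  calc l2norm (A.mulVec (xs - x)) = t := rfl
    _ ≤ 2 * C + X := htle
    _ = 2 * lam / C * T + 2 * C := by rw [hXdef]; ring
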